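/- Let φ be a tight inclusion of a persistence module M into a persistence module N over J, let a < t < b be elements of J, and assume N_t is finite-dimensional. Then dim V^M_t(a,b) − dim W^M_t(a,b) ≤ dim V^N_t(a,b) − dim W^N_t(a,b). (This is the key inequality showing that tight inclusions of persistence modules do not decrease the multiplicity of any bar of the form (a,b], hence induce inclusions of barcodes and persistence diagrams.) -/

import Mathlib

/-- A persistence module over a set `J ⊆ ℝ` of scales: a family of `F`-vector spaces
together with commuting linear bonding maps. -/
structure PersistenceModule (F : Type*) [Field F] (J : Set ℝ) where
  space : J → Type*
  [addCommGroup : ∀ r : J, AddCommGroup (space r)]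
  [module : ∀ r : J, Module F (space r)]
  bond : ∀ r r' : J, (r : ℝ) ≤ (r' : ℝ) → (space r →ₗ[F] space r')
  bond_refl : ∀ r : J, bond r r le_rfl = LinearMap.id
  bond_comp : ∀ (r r' r'' : J) (h : (r : ℝ) ≤ (r' : ℝ)) (h' : (r' : ℝ) ≤ (r'' : ℝ)),
    (bond r' r'' h').comp (bond r r' h) = bond r r'' (h.trans h')

attribute [instance] PersistenceModule.addCommGroup PersistenceModule.module

/-- An inclusion of persistence modules: a family of injective linear maps commuting
with the bonding maps. -/
structure PersistenceModule.Inclusion {F : Type*} [Field F] {J : Set ℝ}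
    (M N : PersistenceModule F J) where
  toFun : ∀ r : J, M.space r →ₗ[F] N.space r
  injective : ∀ r : J, Function.Injective (toFun r)
  comm : ∀ (r r' : J) (h : (r : ℝ) ≤ (r' : ℝ)),
    (toFun r').comp (M.bond r r' h) = (N.bond r r' h).comp (toFun r)

/-- An inclusion `φ` of persistence modules is *tight* if for all `r' < r` in `J`,
`φ_r(Im ρ^M_{r',r}) = (range φ_r) ∩ Im ρ^N_{r',r}`. -/
def PersistenceModule.Inclusion.Tight {F : Type*} [Field F] {J : Set ℝ}
    {M N : PersistenceModule F J} (φ : M.Inclusion N) : Prop :=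
  ∀ (r' r : J) (h : (r' : ℝ) < (r : ℝ)),
    (LinearMap.range (M.bond r' r h.le)).map (φ.toFun r) =
      LinearMap.range (φ.toFun r) ⊓ LinearMap.range (N.bond r' r h.le)

/-- `V^P_t(a,b) = ⋂_{s ∈ J, a < s < t} Im ρ^P_{s,t} ∩ ⋂_{s ∈ J, s > b} ker ρ^P_{t,s}`. -/
noncomputable def PersistenceModule.V {F : Type*} [Field F] {J : Set ℝ}
    (P : PersistenceModule F J) (a t b : J) (htb : (t : ℝ) < (b : ℝ)) :
    Submodule F (P.space t) :=
  (⨅ s : J, ⨅ h : (a : ℝ) < (s : ℝ) ∧ (s : ℝ) < (t : ℝ),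
      LinearMap.range (P.bond s t h.2.le)) ⊓
  (⨅ s : J, ⨅ h : (b : ℝ) < (s : ℝ),
      LinearMap.ker (P.bond t s (htb.trans h).le))

/-- `W^P_t(a,b) = (Im ρ^P_{a,t} ∩ ⋂_{s ∈ J, s > b} ker ρ^P_{t,s})
      + (⋂_{s ∈ J, a < s < t} Im ρ^P_{s,t} ∩ ker ρ^P_{t,b})`. -/
noncomputable def PersistenceModule.W {F : Type*} [Field F] {J : Set ℝ}
    (P : PersistenceModule F J) (a t b : J)
    (hat : (a : ℝ) < (t : ℝ)) (htb : (t : ℝ) < (b : ℝ)) :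
    Submodule F (P.space t) :=
  (LinearMap.range (P.bond a t hat.le) ⊓
    (⨅ s : J, ⨅ h : (b : ℝ) < (s : ℝ),
      LinearMap.ker (P.bond t s (htb.trans h).le))) ⊔
  ((⨅ s : J, ⨅ h : (a : ℝ) < (s : ℝ) ∧ (s : ℝ) < (t : ℝ),
      LinearMap.range (P.bond s t h.2.le)) ⊓
    LinearMap.ker (P.bond t b htb.le))

/-!
`W^P_t(a,b)` consists exactly of the `x ∈ V^P_t(a,b)` with `ρ_{t,b} x ∈ Im ρ_{a,b}`: if
`ρ_{t,b} x = ρ_{a,b} w`, then `x = ρ_{a,t} w + (x - ρ_{a,t} w)` splits `x` along the two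
summands of `W`. Tightness at `a < b` says that this last condition can be tested in `N`
instead of `M`, so `W^M = V^M ∩ φ_t⁻¹(W^N)`. As `φ_t` is injective and maps `V^M` into
`V^N`, Grassmann's formula gives
`dim V^M − dim W^M = dim(φ V^M + W^N) − dim W^N ≤ dim V^N − dim W^N`.
-/

open Module

theorem Submodule.finrank_sub_finrank_inf_le {K E : Type*} [Field K] [AddCommGroup E]
    [Module K E] [FiniteDimensional K E] {A V W : Submodule K E} (hA : A ≤ V) (hW : W ≤ V) :
    (finrank K A : ℤ) - finrank K ↥(A ⊓ W) ≤ finrank K V - finrank K W := by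
  have hsum := Submodule.finrank_sup_add_finrank_inf_eq A W
  have hsup : finrank K ↥(A ⊔ W) ≤ finrank K V := Submodule.finrank_mono (sup_le hA hW)
  omega

theorem LinearMap.finrank_sub_finrank_inf_comap_le {K E E' : Type*} [Field K]
    [AddCommGroup E] [Module K E] [AddCommGroup E'] [Module K E'] [FiniteDimensional K E']
    {f : E →ₗ[K] E'} (hf : Function.Injective f) {A : Submodule K E} {V W : Submodule K E'}
    (hA : A ≤ V.comap f) (hW : W ≤ V) :
    (finrank K A : ℤ) - finrank K ↥(A ⊓ W.comap f) ≤ finrank K V - finrank K W := by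
  have hmap : (A ⊓ W.comap f).map f = A.map f ⊓ W := by
    rw [Submodule.map_inf f hf, Submodule.map_comap_eq, ← inf_assoc,
      inf_eq_left.mpr (LinearMap.map_le_range (f := f))]
  have finrank_map (p : Submodule K E) : finrank K (p.map f) = finrank K p :=
    (Submodule.equivMapOfInjective f hf p).finrank_eq.symm
  rw [← finrank_map, ← finrank_map, hmap]
  exact Submodule.finrank_sub_finrank_inf_le (Submodule.map_le_iff_le_comap.mpr hA) hW

namespace PersistenceModule

variable {F : Type*} [Field F] {J : Set ℝ}

section

variable (P : PersistenceModule F J)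

theorem bond_bond {r r' r'' : J} (h : (r : ℝ) ≤ r') (h' : (r' : ℝ) ≤ r'') (x : P.space r) :
    P.bond r' r'' h' (P.bond r r' h x) = P.bond r r'' (h.trans h') x :=
  LinearMap.congr_fun (P.bond_comp r r' r'' h h') x

theorem range_bond_le_range_bond {a s t : J} (has : (a : ℝ) ≤ s) (hst : (s : ℝ) ≤ t) :
    LinearMap.range (P.bond a t (has.trans hst)) ≤ LinearMap.range (P.bond s t hst) := by
  rintro _ ⟨u, rfl⟩
  exact ⟨P.bond a s has u, P.bond_bond has hst u⟩

theorem ker_bond_le_ker_bond {t b s : J} (htb : (t : ℝ) ≤ b) (hbs : (b : ℝ) ≤ s) :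
    LinearMap.ker (P.bond t b htb) ≤ LinearMap.ker (P.bond t s (htb.trans hbs)) := by
  intro x hx
  rw [LinearMap.mem_ker, ← P.bond_bond htb hbs, LinearMap.mem_ker.mp hx, map_zero]

noncomputable def imageAfter (a t : J) : Submodule F (P.space t) :=
  ⨅ s : J, ⨅ h : (a : ℝ) < (s : ℝ) ∧ (s : ℝ) < (t : ℝ), LinearMap.range (P.bond s t h.2.le)

noncomputable def kernelAfter (t b : J) (htb : (t : ℝ) < (b : ℝ)) : Submodule F (P.space t) :=
  ⨅ s : J, ⨅ h : (b : ℝ) < (s : ℝ), LinearMap.ker (P.bond t s (htb.trans h).le)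

theorem V_eq (a t b : J) (htb : (t : ℝ) < b) :
    P.V a t b htb = P.imageAfter a t ⊓ P.kernelAfter t b htb :=
  rfl

theorem range_bond_le_imageAfter {a t : J} (hat : (a : ℝ) < t) :
    LinearMap.range (P.bond a t hat.le) ≤ P.imageAfter a t :=
  le_iInf₂ fun _ h => P.range_bond_le_range_bond h.1.le h.2.le

theorem ker_bond_le_kernelAfter {t b : J} (htb : (t : ℝ) < b) :
    LinearMap.ker (P.bond t b htb.le) ≤ P.kernelAfter t b htb :=
  le_iInf₂ fun _ h => P.ker_bond_le_ker_bond htb.le h.le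

theorem W_le_V (a t b : J) (hat : (a : ℝ) < t) (htb : (t : ℝ) < b) :
    P.W a t b hat htb ≤ P.V a t b htb :=
  sup_le (inf_le_inf_right _ (P.range_bond_le_imageAfter hat))
    (inf_le_inf_left _ (P.ker_bond_le_kernelAfter htb))

theorem W_le_comap_range_bond (a t b : J) (hat : (a : ℝ) < t) (htb : (t : ℝ) < b) :
    P.W a t b hat htb ≤
      (LinearMap.range (P.bond a b (hat.trans htb).le)).comap (P.bond t b htb.le) := by
  refine sup_le ?_ (inf_le_right.trans (LinearMap.ker_le_comap _))
  rintro _ ⟨⟨u, rfl⟩, -⟩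
  exact ⟨u, (P.bond_bond hat.le htb.le u).symm⟩

theorem V_inf_comap_range_bond_le_W (a t b : J) (hat : (a : ℝ) < t) (htb : (t : ℝ) < b) :
    P.V a t b htb ⊓ (LinearMap.range (P.bond a b (hat.trans htb).le)).comap (P.bond t b htb.le)
      ≤ P.W a t b hat htb := by
  rintro x ⟨hxV, w, hw⟩
  obtain ⟨hx_image, hx_kernel⟩ : x ∈ P.imageAfter a t ∧ x ∈ P.kernelAfter t b htb := hxV
  set y := P.bond a t hat.le w
  have hxy_ker : x - y ∈ LinearMap.ker (P.bond t b htb.le) := by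
    rw [LinearMap.mem_ker, map_sub, P.bond_bond, hw, sub_self]
  have hy : y ∈ P.kernelAfter t b htb := by
    simpa only [sub_sub_cancel] using
      sub_mem hx_kernel (P.ker_bond_le_kernelAfter htb hxy_ker)
  have hxy_image : x - y ∈ P.imageAfter a t :=
    sub_mem hx_image (P.range_bond_le_imageAfter hat ⟨w, rfl⟩)
  exact Submodule.mem_sup.mpr
    ⟨y, ⟨⟨w, rfl⟩, hy⟩, x - y, ⟨hxy_image, hxy_ker⟩, add_sub_cancel _ _⟩

theorem W_eq_V_inf_comap_range_bond (a t b : J) (hat : (a : ℝ) < t) (htb : (t : ℝ) < b) :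
    P.W a t b hat htb = P.V a t b htb ⊓
      (LinearMap.range (P.bond a b (hat.trans htb).le)).comap (P.bond t b htb.le) :=
  le_antisymm (le_inf (P.W_le_V a t b hat htb) (P.W_le_comap_range_bond a t b hat htb))
    (P.V_inf_comap_range_bond_le_W a t b hat htb)

end

namespace Inclusion

variable {M N : PersistenceModule F J}

section

variable (φ : M.Inclusion N)

theorem comm_apply {r r' : J} (h : (r : ℝ) ≤ r') (x : M.space r) :
    φ.toFun r' (M.bond r r' h x) = N.bond r r' h (φ.toFun r x) :=
  LinearMap.congr_fun (φ.comm r r' h) x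

theorem range_bond_le_comap {s t : J} (h : (s : ℝ) ≤ t) :
    LinearMap.range (M.bond s t h) ≤ (LinearMap.range (N.bond s t h)).comap (φ.toFun t) := by
  rintro _ ⟨u, rfl⟩
  exact ⟨φ.toFun s u, (φ.comm_apply h u).symm⟩

theorem ker_bond_le_comap {t s : J} (h : (t : ℝ) ≤ s) :
    LinearMap.ker (M.bond t s h) ≤ (LinearMap.ker (N.bond t s h)).comap (φ.toFun t) := by
  intro x hx
  rw [Submodule.mem_comap, LinearMap.mem_ker, ← φ.comm_apply, LinearMap.mem_ker.mp hx,
    map_zero]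

theorem V_le_comap (a t b : J) (htb : (t : ℝ) < b) :
    M.V a t b htb ≤ (N.V a t b htb).comap (φ.toFun t) := by
  simp only [V_eq, imageAfter, kernelAfter, Submodule.comap_inf, Submodule.comap_iInf]
  exact inf_le_inf (iInf₂_mono fun _ _ => φ.range_bond_le_comap _)
    (iInf₂_mono fun _ _ => φ.ker_bond_le_comap _)

end

section Tight

variable {φ : M.Inclusion N}

theorem Tight.comap_range_bond (hφ : φ.Tight) {a b : J} (hab : (a : ℝ) < b) :
    (LinearMap.range (N.bond a b hab.le)).comap (φ.toFun b) =
      LinearMap.range (M.bond a b hab.le) := by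
  have hφb := Submodule.comap_map_eq_of_injective (φ.injective b)
  calc (LinearMap.range (N.bond a b hab.le)).comap (φ.toFun b)
      = (LinearMap.range (φ.toFun b) ⊓ LinearMap.range (N.bond a b hab.le)).comap
          (φ.toFun b) := by
        rw [Submodule.comap_inf, LinearMap.range_eq_map (φ.toFun b), hφb, top_inf_eq]
    _ = ((LinearMap.range (M.bond a b hab.le)).map (φ.toFun b)).comap (φ.toFun b) := by
        rw [hφ a b hab]
    _ = LinearMap.range (M.bond a b hab.le) := hφb _

theorem Tight.W_eq_V_inf_comap_W (hφ : φ.Tight) (a t b : J) (hat : (a : ℝ) < t)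
    (htb : (t : ℝ) < b) :
    M.W a t b hat htb = M.V a t b htb ⊓ (N.W a t b hat htb).comap (φ.toFun t) := by
  rw [N.W_eq_V_inf_comap_range_bond, Submodule.comap_inf, ← inf_assoc,
    inf_eq_left.mpr (φ.V_le_comap a t b htb), ← Submodule.comap_comp, ← φ.comm,
    Submodule.comap_comp, hφ.comap_range_bond (hat.trans htb), M.W_eq_V_inf_comap_range_bond]

end Tight

end Inclusion

end PersistenceModule

/-- Let `φ` be a tight inclusion of a persistence module `M` into a
persistence module `N` over `J`, let `a < t < b` be elements of `J`, and assume `N_t` is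
finite-dimensional. Then
`dim V^M_t(a,b) − dim W^M_t(a,b) ≤ dim V^N_t(a,b) − dim W^N_t(a,b)`,
i.e. tight inclusions do not decrease the multiplicity of the bar `(a,b]`. -/
theorem multiplicity_le_of_tight
    {F : Type*} [Field F] {J : Set ℝ} {M N : PersistenceModule F J}
    (φ : M.Inclusion N) (hφ : φ.Tight)
    (a t b : J) (hat : (a : ℝ) < (t : ℝ)) (htb : (t : ℝ) < (b : ℝ))
    [FiniteDimensional F (N.space t)] :
    (Module.finrank F (M.V a t b htb) : ℤ) - Module.finrank F (M.W a t b hat htb) ≤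
      (Module.finrank F (N.V a t b htb) : ℤ) - Module.finrank F (N.W a t b hat htb) := by
  rw [hφ.W_eq_V_inf_comap_W a t b hat htb]
  exact LinearMap.finrank_sub_finrank_inf_comap_le (φ.injective t) (φ.V_le_comap a t b htb)
    (N.W_le_V a t b hat htb)
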